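/- arXiv:2501.00809 — 9 statements merged into one kernel-verified Lean document; each statement's English description precedes it below -/
import Mathlib

section
/- Fix an integer m ≥ 2. The map ψ(a,b,c) = (3(m−1)−a−b, a, 1+b+c) is a bijection from 𝓡 onto 𝓜, with inverse (i,j,k) ↦ (j, 3(m−1)−i−j, i+j+k−(3m−2)), and it satisfies wt_𝓜(ψ(u)) = wt_𝓡(u) for every u ∈ 𝓡. In particular, for every w ∈ ℕ the sets 𝓡_w and 𝓜_w have the same cardinality. -/
open Finset

abbrev V : Type := ℤ × ℤ × ℤ

/-- weight of a monomial `(a,b,c)`, i.e. `a + 2b + 3c` -/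
def wtR (u : V) : ℤ := u.1 + 2 * u.2.1 + 3 * u.2.2

/-- the `𝓜`-weight of `(i,j,k)`, i.e. `i + 2j + 3k - 3m` -/
def wtM (m : ℤ) (v : V) : ℤ := v.1 + 2 * v.2.1 + 3 * v.2.2 - 3 * m

/-- `t_𝓡 (a,b,c) = ⌊c/2⌋` -/
def tR (u : V) : ℤ := u.2.2 / 2

/-- `t_𝓜 (i,j,k) = ⌊(3(m-1)-i-j)/3⌋` -/
def tM (m : ℤ) (v : V) : ℤ := (3 * (m - 1) - v.1 - v.2.1) / 3

/-- the threshold number `τ_w = ⌊w/3⌋ - (m-1)` -/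
def tauW (m w : ℤ) : ℤ := w / 3 - (m - 1)

/-- `δ_w = 6m - 9 - w` -/
def deltaW (m w : ℤ) : ℤ := 6 * m - 9 - w

/-- `ε(n)`: residue of `n` mod 2, in `{0,1}` -/
def epsZ (n : ℤ) : ℤ := n % 2

/-- `η(n)`: residue of `n` mod 3, in `{0,1,2}` -/
def etaZ (n : ℤ) : ℤ := n % 3

/-- `ρ(n)`: the representative of `n` mod 6 lying in `{-6,-4,-3,-2,-1,1}` -/
def rhoZ (n : ℤ) : ℤ := if n % 6 = 1 then 1 else n % 6 - 6

/-- `λ(n) = (n - ρ(n))/6` -/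
def lamZ (n : ℤ) : ℤ := (n - rhoZ n) / 6

/-- `q_h = (0, 3h, m - 2h)` -/
def qvec (m h : ℤ) : V := (0, 3 * h, m - 2 * h)

def e1v : V := (1, 1, -1)

def e2v : V := (0, 3, -2)

/-- `u` has non-negative coordinates (i.e. `u ∈ ℕ³`) -/
def nonnegV (u : V) : Prop := 0 ≤ u.1 ∧ 0 ≤ u.2.1 ∧ 0 ≤ u.2.2

/-- `𝓡 = {(a,b,c) ∈ ℕ³ : a + b ≤ 3(m-1)}` -/
def Rfull (m : ℤ) : Set V := {u | nonnegV u ∧ u.1 + u.2.1 ≤ 3 * (m - 1)}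

/-- `𝓜 = {(i,j,k) ∈ ℕ³ : i + j ≤ 3(m-1), i + j + k ≥ 3m - 2}` -/
def Mfull (m : ℤ) : Set V :=
  {v | nonnegV v ∧ v.1 + v.2.1 ≤ 3 * (m - 1) ∧ 3 * m - 2 ≤ v.1 + v.2.1 + v.2.2}

/-- `𝓡' = {(a,b,c) ∈ ℕ³ : 2a + 2b + 3c ≤ 6m - 9}` -/
def Rprime (m : ℤ) : Set V := {u | nonnegV u ∧ 2 * u.1 + 2 * u.2.1 + 3 * u.2.2 ≤ 6 * m - 9}

/-- `𝓜' = {(i,j,k) ∈ ℕ³ : 2i+2j+3k ≤ 9(m-1), i+j ≤ 3(m-1), i+j+k ≥ 3m-2}` -/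
def Mprime (m : ℤ) : Set V :=
  {v | nonnegV v ∧ 2 * v.1 + 2 * v.2.1 + 3 * v.2.2 ≤ 9 * (m - 1) ∧
    v.1 + v.2.1 ≤ 3 * (m - 1) ∧ 3 * m - 2 ≤ v.1 + v.2.1 + v.2.2}

/-- the rectangular region `𝓡^▭` -/
def Rrect (m : ℤ) : Set V := {u ∈ Rprime m | tR u ≤ tauW m (wtR u)}

/-- the rectangular region `𝓜^▭` -/
def Mrect (m : ℤ) : Set V := {v ∈ Mprime m | tM m v ≤ tauW m (wtM m v)}

/-- the triangular region `𝓡^△ = 𝓡' ∖ 𝓡^▭` -/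
def Rtri (m : ℤ) : Set V := {u ∈ Rprime m | tauW m (wtR u) + 1 ≤ tR u}

/-- the triangular region `𝓜^△ = 𝓜' ∖ 𝓜^▭` -/
def Mtri (m : ℤ) : Set V := {v ∈ Mprime m | tauW m (wtM m v) + 1 ≤ tM m v}

/-- the extended triangular region `𝓡^T` -/
def RText (m : ℤ) : Set V := {u | nonnegV u ∧ tauW m (wtR u) + 1 ≤ tR u}

/-- the extended triangular region `𝓜^T` -/
def MText (m : ℤ) : Set V := {v ∈ Mfull m | tauW m (wtM m v) + 1 ≤ tM m v}

/-- the bijection `φ^▭ (u) = u + q_{λ(u)}` on the rectangular region -/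
def phiRect (m : ℤ) (u : V) : V := u + qvec m (lamZ (deltaW m (wtR u) - u.1))

/-- the parametrization `u^△ (w,r,s)` of the extended triangular region `𝓡^T` -/
def uTri (d : V) : V :=
  (3 * d.2.2 + etaZ (d.1 + d.2.1), d.2.1,
    (d.1 - 2 * d.2.1 - 3 * d.2.2 - etaZ (d.1 + d.2.1)) / 3)

/-- the parametrization `v^△ (w,r,s)` of the extended triangular region `𝓜^T` -/
def vTri (m : ℤ) (d : V) : V :=
  ((6 * (m - 1) - d.1 - 2 * d.2.1 + 3 * d.2.2 - epsZ (d.1 + d.2.2)) / 2,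
    2 * d.2.1 + epsZ (d.1 + d.2.2),
    (d.1 - 2 * d.2.1 - d.2.2 + 2 - epsZ (d.1 + d.2.2)) / 2)

/-- `𝓓 = {(w,r,s) ∈ ℕ³ : 2r + 3s ≤ w}` -/
def Dall : Set V := {d | nonnegV d ∧ 2 * d.2.1 + 3 * d.2.2 ≤ d.1}

/-- `t_𝓓 (w,r,s) = ⌊(w - 2r - 3s)/6⌋` -/
def tD (d : V) : ℤ := (d.1 - 2 * d.2.1 - 3 * d.2.2) / 6

/-- `𝓓^T = {d ∈ 𝓓 : t_𝓓(d) ≥ τ_w + 1}` -/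
def DText (m : ℤ) : Set V := {d ∈ Dall | tauW m d.1 + 1 ≤ tD d}

/-- explicit formula for `φ^△ = v^△ ∘ (u^△)⁻¹`: for `u = (a,b,c) ∈ 𝓡^T` the unique
`(w,r,s) ∈ 𝓓^T` with `u^△(w,r,s) = u` is `(wt(u), b, ⌊a/3⌋)`. -/
def phiTri (m : ℤ) (u : V) : V := vTri m (wtR u, u.2.1, u.1 / 3)

/-- the glued bijection `φ`: `φ^▭` on `𝓡^▭` and `φ^△` on `𝓡^△` -/
def phiW (m : ℤ) (u : V) : V :=
  if tR u ≤ tauW m (wtR u) then phiRect m u else phiTri m u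

noncomputable def boxF (N : ℤ) : Finset V := Finset.Icc 0 N ×ˢ (Finset.Icc 0 N ×ˢ Finset.Icc 0 N)

/-- `𝓡_w` as a finset -/
noncomputable def RfullWF (m w : ℤ) : Finset V :=
  (boxF w).filter fun u => u.1 + u.2.1 ≤ 3 * (m - 1) ∧ wtR u = w

/-- `𝓜_w` as a finset -/
noncomputable def MfullWF (m w : ℤ) : Finset V :=
  (boxF (w + 3 * m)).filter fun v =>
    v.1 + v.2.1 ≤ 3 * (m - 1) ∧ 3 * m - 2 ≤ v.1 + v.2.1 + v.2.2 ∧ wtM m v = w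

/-- `𝓡'_w` as a finset -/
noncomputable def RprimeWF (m w : ℤ) : Finset V :=
  (boxF w).filter fun u => 2 * u.1 + 2 * u.2.1 + 3 * u.2.2 ≤ 6 * m - 9 ∧ wtR u = w

/-- `𝓜'_w` as a finset -/
noncomputable def MprimeWF (m w : ℤ) : Finset V :=
  (boxF (w + 3 * m)).filter fun v =>
    2 * v.1 + 2 * v.2.1 + 3 * v.2.2 ≤ 9 * (m - 1) ∧ v.1 + v.2.1 ≤ 3 * (m - 1) ∧
      3 * m - 2 ≤ v.1 + v.2.1 + v.2.2 ∧ wtM m v = w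

/-- `𝓡^▭_w` as a finset -/
noncomputable def RrectWF (m w : ℤ) : Finset V := (RprimeWF m w).filter fun u => tR u ≤ tauW m w

/-- `𝓜^▭_w` as a finset -/
noncomputable def MrectWF (m w : ℤ) : Finset V := (MprimeWF m w).filter fun v => tM m v ≤ tauW m w

/-- `𝓡^△_w` as a finset -/
noncomputable def RtriWF (m w : ℤ) : Finset V := (RprimeWF m w).filter fun u => tauW m w + 1 ≤ tR u

/-- `𝓜^△_w` as a finset -/
noncomputable def MtriWF (m w : ℤ) : Finset V := (MprimeWF m w).filter fun v => tauW m w + 1 ≤ tM m v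

/-- `λ(u) = λ(δ_w - a(u))` -/
def lamU (m w : ℤ) (u : V) : ℤ := lamZ (deltaW m w - u.1)

/-- the order `≺` on `𝓡^▭_w` -/
def precR (m w : ℤ) (u u' : V) : Prop :=
  lamU m w u < lamU m w u' ∨
    (lamU m w u = lamU m w u' ∧ u'.1 < u.1) ∨
      (lamU m w u = lamU m w u' ∧ u.1 = u'.1 ∧ tR u < tR u')

/-- the order `≺` on `𝓜^▭_w` -/
def precM (m w : ℤ) (v v' : V) : Prop :=
  lamU m w v < lamU m w v' ∨
    (lamU m w v = lamU m w v' ∧ v'.1 < v.1) ∨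
      (lamU m w v = lamU m w v' ∧ v.1 = v'.1 ∧ tM m v < tM m v')

/-- the bijection `φ̂_{ℓ₀} : 𝓑 → 𝓒` on the abstract special block;
on `𝓑`, points are `u⁰_ℓ = (0, 3ℓ, -2ℓ)` and `u¹_ℓ = (1, 3ℓ+1, -2ℓ-1)`. -/
def phiHatB (m n l0 : ℤ) (u : V) : V :=
  if u.1 = 0 then
    if u.2.1 / 3 < l0 then (0, 3 * (n + u.2.1 / 3 + 1), m - 2 * (n + u.2.1 / 3 + 1))
    else if u.2.1 / 3 = l0 then (1, 3 * (n + l0) + 1, m - 2 * (n + l0) - 1)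
    else (0, 3 * (n + u.2.1 / 3), m - 2 * (n + u.2.1 / 3))
  else
    if (u.2.1 - 1) / 3 < l0 then
      (1, 3 * (n + (u.2.1 - 1) / 3) + 1, m - 2 * (n + (u.2.1 - 1) / 3) - 1)
    else (1, 3 * (n + (u.2.1 - 1) / 3 + 1) + 1, m - 2 * (n + (u.2.1 - 1) / 3 + 1) - 1)

/-- the abstract special block `𝓑`: `u⁰_ℓ = ℓ·e₂` for `0 ≤ ℓ ≤ τ+1`,
`u¹_ℓ = e₁ + ℓ·e₂` for `0 ≤ ℓ ≤ τ` -/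
def BblockF (t : ℕ) : Finset V :=
  ((Finset.range (t + 2)).image fun l : ℕ => ((0 : ℤ), 3 * (l : ℤ), -2 * (l : ℤ))) ∪
    ((Finset.range (t + 1)).image fun l : ℕ => ((1 : ℤ), 3 * (l : ℤ) + 1, -2 * (l : ℤ) - 1))

/-- the abstract special block `𝓒`: `v⁰_ℓ = (0,0,m) + (n+ℓ)·e₂` for `1 ≤ ℓ ≤ τ+1`,
`v¹_ℓ = (0,0,m) + e₁ + (n+ℓ)·e₂` for `0 ≤ ℓ ≤ τ+1` -/
def CblockF (m n t : ℕ) : Finset V :=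
  ((Finset.Icc 1 (t + 1)).image fun l : ℕ =>
      ((0 : ℤ), 3 * ((n : ℤ) + (l : ℤ)), (m : ℤ) - 2 * ((n : ℤ) + (l : ℤ)))) ∪
    ((Finset.range (t + 2)).image fun l : ℕ =>
      ((1 : ℤ), 3 * ((n : ℤ) + (l : ℤ)) + 1, (m : ℤ) - 2 * ((n : ℤ) + (l : ℤ)) - 1))

/-- `δ_{w,n} = δ_w - 6n` -/
def deltaWN (m w n : ℤ) : ℤ := deltaW m w - 6 * n

/-- `n_max = ⌊(6m - 9 - w)/6⌋` -/
def nmaxZ (m w : ℤ) : ℤ := (6 * m - 9 - w) / 6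

/-- the special block `𝓑_n ⊆ 𝓡'_w` -/
def Bblock (m w n : ℤ) : Set V :=
  {u ∈ Rprime m | wtR u = w ∧ (u.1 = deltaWN m w n ∨ u.1 = deltaWN m w n - 1) ∧
    3 * n - 1 + etaZ w ≤ u.2.1}

/-- the special block `𝓒_n ⊆ 𝓜'_w` -/
def Cblock (m w n : ℤ) : Set V :=
  {v ∈ Mprime m | wtM m v = w ∧ (v.1 = deltaWN m w n ∨ v.1 = deltaWN m w n - 1) ∧
    6 * n + 2 ≤ v.2.1}

/-- the corner monomial `u⁰_{n,0} = (δ_{w,n}-1, 3n-1+η(w), c_w)` of `𝓑_n` -/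
def cornerB (m w n : ℤ) : V := (deltaWN m w n - 1, 3 * n - 1 + etaZ w, 2 * (tauW m w + 1))

def psiMap (m : ℤ) (u : V) : V := (3 * (m - 1) - u.1 - u.2.1, u.1, 1 + u.2.1 + u.2.2)

def psiInv (m : ℤ) (v : V) : V :=
  (v.2.1, 3 * (m - 1) - v.1 - v.2.1, v.1 + v.2.1 + v.2.2 - (3 * m - 2))

theorem Set.BijOn.sep_comp {α β : Type*} {f : α → β} {s : Set α} {t : Set β}
    (hf : Set.BijOn f s t) (p : β → Prop) :
    Set.BijOn f {x ∈ s | p (f x)} {y ∈ t | p y} :=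
  hf.inter_mapsTo (Set.mapsTo_preimage f {y | p y}) Set.inter_subset_right

section Psi

variable (m : ℤ)

theorem wtM_psiMap (u : V) : wtM m (psiMap m u) = wtR u := by
  simp only [psiMap, wtM, wtR]
  ring

theorem psiInv_psiMap (u : V) : psiInv m (psiMap m u) = u := by
  obtain ⟨a, b, c⟩ := u
  simp only [psiMap, psiInv, Prod.mk.injEq]
  exact ⟨trivial, by ring, by ring⟩

theorem psiMap_psiInv (v : V) : psiMap m (psiInv m v) = v := by
  obtain ⟨i, j, k⟩ := v
  simp only [psiMap, psiInv, Prod.mk.injEq]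
  exact ⟨by ring, trivial, by ring⟩

theorem psiMap_mapsTo : Set.MapsTo (psiMap m) (Rfull m) (Mfull m) := by
  rintro ⟨a, b, c⟩ hu
  simp only [Rfull, Mfull, nonnegV, psiMap, Set.mem_ofPred_eq] at *
  omega

theorem psiInv_mapsTo : Set.MapsTo (psiInv m) (Mfull m) (Rfull m) := by
  rintro ⟨i, j, k⟩ hv
  simp only [Rfull, Mfull, nonnegV, psiInv, Set.mem_ofPred_eq] at *
  omega

theorem psiInv_invOn : Set.InvOn (psiInv m) (psiMap m) (Rfull m) (Mfull m) :=
  ⟨fun u _ => psiInv_psiMap m u, fun v _ => psiMap_psiInv m v⟩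

theorem psiMap_bijOn : Set.BijOn (psiMap m) (Rfull m) (Mfull m) :=
  (psiInv_invOn m).bijOn (psiMap_mapsTo m) (psiInv_mapsTo m)

end Psi

theorem psi_bijection_general (m : ℤ) :
    Set.BijOn (psiMap m) (Rfull m) (Mfull m) ∧
    Set.InvOn (psiInv m) (psiMap m) (Rfull m) (Mfull m) ∧
    (∀ u ∈ Rfull m, wtM m (psiMap m u) = wtR u) ∧
    ∀ w : ℕ, ({u ∈ Rfull m | wtR u = (w : ℤ)}).ncard =
      ({v ∈ Mfull m | wtM m v = (w : ℤ)}).ncard := by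
  refine ⟨psiMap_bijOn m, psiInv_invOn m, fun u _ => wtM_psiMap m u, fun w => ?_⟩
  simpa only [wtM_psiMap] using
    ((psiMap_bijOn m).sep_comp fun v => wtM m v = (w : ℤ)).ncard_eq

/-- **Proposition `Mstructure`.** `ψ` is a weight-preserving bijection
`𝓡 → 𝓜` with the stated inverse; in particular `𝓡_w` and `𝓜_w` have the same
cardinality for every `w ∈ ℕ`. -/
theorem psi_bijection (m : ℤ) (hm : 2 ≤ m) :
    Set.BijOn (psiMap m) (Rfull m) (Mfull m) ∧
    Set.InvOn (psiInv m) (psiMap m) (Rfull m) (Mfull m) ∧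
    (∀ u ∈ Rfull m, wtM m (psiMap m u) = wtR u) ∧
    ∀ w : ℕ, ({u ∈ Rfull m | wtR u = (w : ℤ)}).ncard =
      ({v ∈ Mfull m | wtM m v = (w : ℤ)}).ncard :=
  psi_bijection_general m
end

section
/- Fix an integer m ≥ 2. Let g ∈ k[x,y,z] be a wt-homogeneous polynomial of weight 3m in which the monomial z^m occurs with nonzero coefficient. Let I_g = (x,y)^{3m−2} + (g) and J = (x,y,z)^{3m−2}. Then for every w ∈ ℕ, the k-dimension of the space of wt-homogeneous polynomials of weight w belonging to I_g equals the k-dimension of the space of wt-homogeneous polynomials of weight w belonging to J; equivalently, k[x,y,z]/I_g and k[x,y,z]/J are isomorphic as wt-graded k-vector spaces. -/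
/-!
In weight `w`, the space `J_w` has the basis of monomials of weight `w` and total degree
`≥ 3m-2`. The space `(I_g)_w` is the direct sum of the span of the monomials of weight `w` and
`(x,y)`-degree `≥ 3m-2` and of `g` times the polynomials of weight `w - 3m` all of whose
monomials have `(x,y)`-degree `< 3m-2`. The sum is direct because `z^m` is the only monomial of
`g` of `z`-degree `≥ m`, so if `x^a y^b z^c` is the monomial of highest `z`-degree of such a
polynomial, `x^a y^b z^(c+m)` occurs in its product with `g` and has `(x,y)`-degree `< 3m-2`. It remains to count:
`(a,b,c) ↦ (b, 3m-3-a-b, a+b+c-3m+2)` matches the monomials of weight `w` with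
`a+b < 3m-2 ≤ a+b+c` with the monomials of weight `w - 3m` and `(x,y)`-degree `< 3m-2`.
-/

open MvPolynomial

namespace Finsupp

theorem eq_single_of_weight_eq_of_le {σ : Type*} {w : σ → ℕ} (hw : ∀ j, w j ≠ 0)
    {f : σ →₀ ℕ} {i : σ} {m : ℕ} (hf : weight w f = w i * m) (hm : m ≤ f i) :
    f = single i m := by
  have := nonTorsionWeight_of ℕ w hw
  rw [← erase_add_single i f, map_add, weight_single, smul_eq_mul] at hf
  have hle : w i * m ≤ f i * w i := by rw [mul_comm]; exact Nat.mul_le_mul_right _ hm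
  have herase : weight w (f.erase i) = 0 := by omega
  have hfi : f i = m :=
    Nat.eq_of_mul_eq_mul_right (Nat.pos_of_ne_zero (hw i)) (by rw [mul_comm m]; omega)
  rw [← erase_add_single i f, (weight_eq_zero_iff_eq_zero w).mp herase, zero_add, hfi]

theorem weight_fin_three (a b c : ℕ) (d : Fin 3 →₀ ℕ) :
    weight ![a, b, c] d = d 0 * a + d 1 * b + d 2 * c := by
  simp [weight_eq_sum, Fin.sum_univ_three]

theorem finite_setOf_weight_one_two_three_eq (w : ℕ) :
    {d : Fin 3 →₀ ℕ | weight ![1, 2, 3] d = w}.Finite :=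
  finite_of_nat_weight_eq _ (by decide) w

theorem ncard_weight_eq_inter_le_sum_three (m w : ℕ) :
    ({d : Fin 3 →₀ ℕ | weight ![1, 2, 3] d = w} ∩
        {d | 3 * m - 2 ≤ ∑ i ∈ ({0, 1, 2} : Finset (Fin 3)), d i}).ncard =
      ({d : Fin 3 →₀ ℕ | weight ![1, 2, 3] d = w} ∩
          {d | 3 * m - 2 ≤ ∑ i ∈ ({0, 1} : Finset (Fin 3)), d i}).ncard +
        ({d : Fin 3 →₀ ℕ | weight ![1, 2, 3] d + 3 * m = w} ∩
          {d | ∑ i ∈ ({0, 1} : Finset (Fin 3)), d i < 3 * m - 2}).ncard := by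
  have hfin := finite_setOf_weight_one_two_three_eq w
  have h01 (d : Fin 3 →₀ ℕ) : ∑ i ∈ ({0, 1} : Finset (Fin 3)), d i = d 0 + d 1 :=
    Finset.sum_pair (by decide)
  have h012 (d : Fin 3 →₀ ℕ) : ∑ i ∈ ({0, 1, 2} : Finset (Fin 3)), d i = d 0 + d 1 + d 2 := by
    rw [Finset.sum_insert (by decide), Finset.sum_pair (by decide), add_assoc]
  have hsub : {d : Fin 3 →₀ ℕ | weight ![1, 2, 3] d = w} ∩ {d | 3 * m - 2 ≤ d 0 + d 1} ⊆
      {d | weight ![1, 2, 3] d = w} ∩ {d | 3 * m - 2 ≤ d 0 + d 1 + d 2} :=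
    Set.inter_subset_inter_right _ (Set.ofPred_subset_ofPred.mpr fun d hd => by omega)
  simp only [h01, h012]
  rw [← Set.union_sdiff_cancel hsub, Set.ncard_union_eq Set.disjoint_sdiff_right
    (hfin.subset Set.inter_subset_left) (hfin.subset (Set.sdiff_subset.trans Set.inter_subset_left))]
  congr 1
  refine Set.ncard_congr (fun d _ => equivFunOnFinite.symm
    ![d 1, 3 * m - 3 - (d 0 + d 1), d 0 + d 1 + d 2 - (3 * m - 2)]) ?_ ?_ ?_
  · rintro d ⟨⟨hw, hJ⟩, hH⟩
    simp only [Set.mem_inter_iff, Set.mem_ofPred_eq, weight_fin_three, Matrix.cons_val,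
      equivFunOnFinite_symm_apply_apply] at hw hJ hH ⊢
    omega
  · rintro d d' ⟨⟨hw, hJ⟩, hH⟩ ⟨⟨hw', hJ'⟩, hH'⟩ h
    have h0 := congr($h 0)
    have h1 := congr($h 1)
    have h2 := congr($h 2)
    simp only [Set.mem_inter_iff, Set.mem_ofPred_eq, weight_fin_three, Matrix.cons_val,
      equivFunOnFinite_symm_apply_apply] at hw hJ hH hw' hJ' hH' h0 h1 h2
    ext i
    fin_cases i <;> dsimp <;> omega
  · rintro b ⟨hw, hH⟩
    refine ⟨equivFunOnFinite.symm ![3 * m - 3 - (b 0 + b 1), b 0, b 2 + b 1 + 1], ?_, ?_⟩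
    · simp only [Set.mem_sdiff, Set.mem_inter_iff, Set.mem_ofPred_eq, weight_fin_three,
        Matrix.cons_val, equivFunOnFinite_symm_apply_apply] at hw hH ⊢
      omega
    · simp only [Set.mem_ofPred_eq, weight_fin_three] at hw hH
      ext i
      fin_cases i <;> dsimp <;> omega

end Finsupp

namespace MvPolynomial

section CommSemiring

variable {σ R : Type*} [CommSemiring R]

theorem monomial_mem_pow_span_X_image {S : Finset σ} {n : ℕ} {d : σ →₀ ℕ}
    (hd : n ≤ ∑ i ∈ S, d i) (r : R) :
    monomial d r ∈ Ideal.span (X '' (S : Set σ)) ^ n := by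
  classical
  induction n generalizing d with
  | zero => simp [Ideal.one_eq_top]
  | succ n ih =>
    obtain ⟨i, hiS, hi⟩ := Finset.exists_ne_zero_of_sum_ne_zero (by omega : ∑ i ∈ S, d i ≠ 0)
    obtain ⟨e, rfl⟩ : ∃ e, d = e + Finsupp.single i 1 :=
      ⟨d - Finsupp.single i 1, (tsub_add_cancel_of_le (by simpa [Nat.one_le_iff_ne_zero])).symm⟩
    have hsum : ∑ j ∈ S, (e + Finsupp.single i 1 : σ →₀ ℕ) j = ∑ j ∈ S, e j + 1 := by
      simp [Finset.sum_add_distrib, Finsupp.single_apply, hiS]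
    rw [monomial_add_single, pow_one, pow_succ]
    exact Ideal.mul_mem_mul (ih (by omega)) (Ideal.subset_span ⟨i, hiS, rfl⟩)

theorem le_sum_of_mem_pow_span_X_image {S : Finset σ} {n : ℕ} {p : MvPolynomial σ R}
    (hp : p ∈ Ideal.span (X '' (S : Set σ)) ^ n) : ∀ d ∈ p.support, n ≤ ∑ i ∈ S, d i := by
  classical
  induction n generalizing p with
  | zero => simp
  | succ n ih =>
    rw [pow_succ] at hp
    refine Submodule.mul_induction_on hp (fun a ha b hb d hd => ?_) (fun a b ha hb d hd => ?_)
    · obtain ⟨e, he, f, hf, rfl⟩ := Finset.mem_add.mp (support_mul a b hd)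
      obtain ⟨i, hiS, hi⟩ := mem_ideal_span_X_image.mp hb f hf
      have hf1 : 1 ≤ ∑ i ∈ S, f i :=
        (Nat.one_le_iff_ne_zero.mpr hi).trans (Finset.single_le_sum (by simp) hiS)
      have he := ih ha e he
      simp only [Finsupp.add_apply, Finset.sum_add_distrib]
      omega
    · rcases Finset.mem_union.mp (support_add hd) with h | h
      exacts [ha d h, hb d h]

theorem restrictScalars_pow_span_X_image (S : Finset σ) (n : ℕ) :
    (Ideal.span (X '' (S : Set σ)) ^ n).restrictScalars R =
      restrictSupport R {d | n ≤ ∑ i ∈ S, d i} := by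
  apply le_antisymm
  · exact fun _ hp => le_sum_of_mem_pow_span_X_image hp
  · rw [restrictSupport_eq_span, Submodule.span_le]
    rintro _ ⟨d, hd, rfl⟩
    exact monomial_mem_pow_span_X_image hd 1

theorem restrictSupport_inter (s t : Set (σ →₀ ℕ)) :
    restrictSupport R (s ∩ t) = restrictSupport R s ⊓ restrictSupport R t := by
  ext p
  simp only [Submodule.mem_inf, mem_restrictSupport_iff, Set.subset_inter_iff]

theorem restrictSupport_sup_restrictSupport_compl (s : Set (σ →₀ ℕ)) :
    restrictSupport R s ⊔ restrictSupport R sᶜ = ⊤ := by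
  rw [restrictSupport_eq_span, restrictSupport_eq_span, ← Submodule.span_union, ← Set.image_union,
    Set.union_compl_self, ← restrictSupport_eq_span, restrictSupport_univ]

theorem restrictScalars_pow_span_X_image_add_span_singleton (S : Finset σ) (n : ℕ)
    (g : MvPolynomial σ R) :
    (Ideal.span (X '' (S : Set σ)) ^ n + Ideal.span {g}).restrictScalars R =
      restrictSupport R {d | n ≤ ∑ i ∈ S, d i} ⊔
        (restrictSupport R {d | ∑ i ∈ S, d i < n}).map (LinearMap.mulRight R g) := by
  have hcompl : {d : σ →₀ ℕ | ∑ i ∈ S, d i < n} = {d | n ≤ ∑ i ∈ S, d i}ᶜ := by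
    ext; simp
  apply le_antisymm
  · intro p hp
    obtain ⟨q, hq, _, hr, rfl⟩ := Submodule.mem_sup.mp hp
    obtain ⟨s, rfl⟩ := Ideal.mem_span_singleton'.mp hr
    have hs : s ∈ restrictSupport R {d | n ≤ ∑ i ∈ S, d i} ⊔
        restrictSupport R {d | ∑ i ∈ S, d i < n} := by
      rw [hcompl, restrictSupport_sup_restrictSupport_compl]; trivial
    obtain ⟨a, ha, b, hb, rfl⟩ := Submodule.mem_sup.mp hs
    rw [← restrictScalars_pow_span_X_image] at ha ⊢
    rw [add_mul, ← add_assoc]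
    exact Submodule.add_mem_sup (Ideal.add_mem _ hq (Ideal.mul_mem_right _ _ ha)) ⟨b, hb, rfl⟩
  · rw [← restrictScalars_pow_span_X_image, sup_le_iff]
    refine ⟨fun p hp => Submodule.mem_sup_left hp, ?_⟩
    rintro _ ⟨s, -, rfl⟩
    exact Submodule.mem_sup_right (Ideal.mem_span_singleton'.mpr ⟨s, rfl⟩)

theorem exists_add_single_mem_support_mul [NoZeroDivisors R] {g h : MvPolynomial σ R} {i : σ}
    {m : ℕ} (hgi : coeff (Finsupp.single i m) g ≠ 0)
    (hg : ∀ f ∈ g.support, m ≤ f i → f = Finsupp.single i m) (hh : h ≠ 0) :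
    ∃ d ∈ h.support, d + Finsupp.single i m ∈ (h * g).support := by
  classical
  obtain ⟨d, hd, hmax⟩ := Finset.exists_max_image h.support (fun d => d i)
    (support_nonempty.mpr hh)
  refine ⟨d, hd, ?_⟩
  rw [mem_support_iff, coeff_mul, Finset.sum_eq_single_of_mem (d, Finsupp.single i m)
    (Finset.HasAntidiagonal.mem_antidiagonal.mpr rfl)]
  · exact mul_ne_zero (mem_support_iff.mp hd) hgi
  rintro ⟨e, f⟩ hef hne
  rw [Finset.HasAntidiagonal.mem_antidiagonal] at hef
  by_contra hc
  obtain ⟨he, hf⟩ := ne_zero_and_ne_zero_of_mul hc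
  have hefi : e i + f i = d i + m := by simpa using congr($hef i)
  have hei := hmax e (mem_support_iff.mpr he)
  obtain rfl := hg f (mem_support_iff.mpr hf) (by omega)
  exact hne (by simpa using hef)

theorem disjoint_restrictSupport_map_mulRight [NoZeroDivisors R] {S : Finset σ} {n : ℕ}
    {g : MvPolynomial σ R} {i : σ} {m : ℕ} (hiS : i ∉ S)
    (hgi : coeff (Finsupp.single i m) g ≠ 0)
    (hg : ∀ f ∈ g.support, m ≤ f i → f = Finsupp.single i m) :
    Disjoint (restrictSupport R {d | n ≤ ∑ j ∈ S, d j})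
      ((restrictSupport R {d | ∑ j ∈ S, d j < n}).map (LinearMap.mulRight R g)) := by
  rw [Submodule.disjoint_def]
  rintro _ hhg ⟨h, hh, rfl⟩
  rw [LinearMap.mulRight_apply] at hhg ⊢
  by_contra hne
  obtain ⟨d, hd, hdg⟩ := exists_add_single_mem_support_mul hgi hg (left_ne_zero_of_mul hne)
  have hsum : ∑ j ∈ S, (d + Finsupp.single i m) j = ∑ j ∈ S, d j :=
    Finset.sum_congr rfl fun j hj => by
      simp [Finsupp.single_eq_of_ne (show j ≠ i by rintro rfl; exact hiS hj)]
  have hhigh : n ≤ ∑ j ∈ S, (d + Finsupp.single i m) j := hhg hdg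
  have hlow : ∑ j ∈ S, d j < n := hh hd
  omega

section Weighted

variable {M : Type*} [AddCommMonoid M] (w : σ → M)

theorem weightedHomogeneousSubmodule_eq_restrictSupport (n : M) :
    weightedHomogeneousSubmodule R w n = restrictSupport R {d | Finsupp.weight w d = n} :=
  weightedHomogeneousSubmodule_eq_finsupp_supported R w n

theorem restrictSupport_inter_weight_eq_le (n : M) (A : Set (σ →₀ ℕ)) :
    restrictSupport R ({d | Finsupp.weight w d = n} ∩ A) ≤ weightedHomogeneousSubmodule R w n := by
  rw [weightedHomogeneousSubmodule_eq_restrictSupport]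
  exact restrictSupport_mono R Set.inter_subset_left

theorem map_weightedHomogeneousComponent_restrictSupport_le (n : M) (A : Set (σ →₀ ℕ)) :
    (restrictSupport R A).map (weightedHomogeneousComponent w n) ≤
      restrictSupport R ({d | Finsupp.weight w d = n} ∩ A) := by
  classical
  rintro _ ⟨p, hp, rfl⟩
  rw [mem_restrictSupport_iff, support_weightedHomogeneousComponent]
  intro d hd
  simp only [Finset.coe_filter, Set.mem_ofPred_eq] at hd
  exact ⟨hd.2, hp hd.1⟩

variable {w}

theorem map_mulRight_restrictSupport_le {g : MvPolynomial σ R} {u : M}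
    (hg : IsWeightedHomogeneous w g u) (n : M) (B : Set (σ →₀ ℕ)) :
    (restrictSupport R ({d | Finsupp.weight w d + u = n} ∩ B)).map (LinearMap.mulRight R g) ≤
      weightedHomogeneousSubmodule R w n := by
  rw [restrictSupport_eq_span, Submodule.map_span, Submodule.span_le]
  rintro _ ⟨_, ⟨d, hd, rfl⟩, rfl⟩
  exact hd.1 ▸ (isWeightedHomogeneous_monomial w d 1 rfl).mul hg

theorem map_weightedHomogeneousComponent_map_mulRight_le {g : MvPolynomial σ R} {u : M}
    (hg : IsWeightedHomogeneous w g u) (n : M) (B : Set (σ →₀ ℕ)) :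
    ((restrictSupport R B).map (LinearMap.mulRight R g)).map (weightedHomogeneousComponent w n) ≤
      (restrictSupport R ({d | Finsupp.weight w d + u = n} ∩ B)).map (LinearMap.mulRight R g) := by
  rw [restrictSupport_eq_span, Submodule.map_span, Submodule.map_span, Submodule.span_le]
  rintro _ ⟨_, ⟨_, ⟨d, hd, rfl⟩, rfl⟩, rfl⟩
  have hdg := (isWeightedHomogeneous_monomial w d (1 : R) rfl).mul hg
  by_cases hn : Finsupp.weight w d + u = n
  · rw [LinearMap.mulRight_apply, ← hn, hdg.weightedHomogeneousComponent_same]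
    exact ⟨monomial d 1, by simp [hn, hd], rfl⟩
  · rw [LinearMap.mulRight_apply, hdg.weightedHomogeneousComponent_ne n (Ne.symm hn)]
    exact zero_mem _

theorem weightedHomogeneousSubmodule_inf_restrictSupport_sup_map_mulRight
    {g : MvPolynomial σ R} {u : M} (hg : IsWeightedHomogeneous w g u) (n : M)
    (A B : Set (σ →₀ ℕ)) :
    weightedHomogeneousSubmodule R w n ⊓
        (restrictSupport R A ⊔ (restrictSupport R B).map (LinearMap.mulRight R g)) =
      restrictSupport R ({d | Finsupp.weight w d = n} ∩ A) ⊔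
        (restrictSupport R ({d | Finsupp.weight w d + u = n} ∩ B)).map (LinearMap.mulRight R g) := by
  apply le_antisymm
  · rintro p ⟨hpn, hp⟩
    rw [← (show IsWeightedHomogeneous w p n from hpn).weightedHomogeneousComponent_same]
    refine (Submodule.map_sup _ _ _).trans_le (sup_le_sup ?_ ?_) ⟨p, hp, rfl⟩
    · exact map_weightedHomogeneousComponent_restrictSupport_le w n A
    · exact map_weightedHomogeneousComponent_map_mulRight_le hg n B
  · refine sup_le (le_inf (restrictSupport_inter_weight_eq_le w n A) ?_)
      (le_inf (map_mulRight_restrictSupport_le hg n B) ?_)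
    · exact le_sup_of_le_left (restrictSupport_mono R Set.inter_subset_right)
    · exact le_sup_of_le_right (Submodule.map_mono (restrictSupport_mono R Set.inter_subset_right))

end Weighted

end CommSemiring

section Field

variable {σ k : Type*} [Field k]

theorem finrank_restrictSupport (s : Set (σ →₀ ℕ)) :
    Module.finrank k (restrictSupport k s) = s.ncard := by
  rw [Module.finrank_eq_nat_card_basis (basisRestrictSupport k s), Nat.card_coe_set_eq]

theorem finrank_restrictSupport_sup_map_mulRight {A B : Set (σ →₀ ℕ)}
    (hA : A.Finite) (hB : B.Finite) {g : MvPolynomial σ k} (hg : g ≠ 0)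
    (hAB : Disjoint (restrictSupport k A) ((restrictSupport k B).map (LinearMap.mulRight k g))) :
    Module.finrank k ↥(restrictSupport k A ⊔ (restrictSupport k B).map (LinearMap.mulRight k g)) =
      A.ncard + B.ncard := by
  have := hA.to_subtype
  have := hB.to_subtype
  have := Module.Finite.of_basis (basisRestrictSupport k A)
  have := Module.Finite.of_basis (basisRestrictSupport k B)
  rw [← add_zero (Module.finrank k _), ← finrank_bot k (MvPolynomial σ k), ← hAB.eq_bot,
    Submodule.finrank_sup_add_finrank_inf_eq,
    ← (Submodule.equivMapOfInjective _ (mul_left_injective₀ hg) _).finrank_eq,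
    finrank_restrictSupport, finrank_restrictSupport]

end Field

end MvPolynomial

theorem same_hilbert_function_general (k : Type) [Field k] (m : ℕ)
    (g : MvPolynomial (Fin 3) k)
    (hg : MvPolynomial.IsWeightedHomogeneous (![1, 2, 3] : Fin 3 → ℕ) g (3 * m))
    (hz : MvPolynomial.coeff (Finsupp.single (2 : Fin 3) m) g ≠ 0) :
    ∀ w : ℕ,
      Module.finrank k
        ↥(MvPolynomial.weightedHomogeneousSubmodule k (![1, 2, 3] : Fin 3 → ℕ) w ⊓
          Submodule.restrictScalars k
            (Ideal.span {MvPolynomial.X (0 : Fin 3), MvPolynomial.X 1} ^ (3 * m - 2) +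
              Ideal.span {g})) =
      Module.finrank k
        ↥(MvPolynomial.weightedHomogeneousSubmodule k (![1, 2, 3] : Fin 3 → ℕ) w ⊓
          Submodule.restrictScalars k
            ((Ideal.span {MvPolynomial.X (0 : Fin 3), MvPolynomial.X 1, MvPolynomial.X 2} :
              Ideal (MvPolynomial (Fin 3) k)) ^ (3 * m - 2))) := by
  intro w
  have hxy : ({X 0, X 1} : Set (MvPolynomial (Fin 3) k)) = X '' ↑({0, 1} : Finset (Fin 3)) := by
    simp [Set.image_insert_eq]
  have hxyz : ({X 0, X 1, X 2} : Set (MvPolynomial (Fin 3) k)) =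
      X '' ↑({0, 1, 2} : Finset (Fin 3)) := by
    simp [Set.image_insert_eq]
  have hmonic : ∀ f ∈ g.support, m ≤ f 2 → f = Finsupp.single 2 m := fun f hf hfm =>
    Finsupp.eq_single_of_weight_eq_of_le (by decide) (hg (mem_support_iff.mp hf)) hfm
  have hdisj := disjoint_restrictSupport_map_mulRight (n := 3 * m - 2)
    (by decide : (2 : Fin 3) ∉ ({0, 1} : Finset (Fin 3))) hz hmonic
  have hfin := Finsupp.finite_setOf_weight_one_two_three_eq
  rw [hxy, hxyz, restrictScalars_pow_span_X_image_add_span_singleton,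
    weightedHomogeneousSubmodule_inf_restrictSupport_sup_map_mulRight hg,
    finrank_restrictSupport_sup_map_mulRight _ _ (fun h => hz (by simp [h]))
      (hdisj.mono (restrictSupport_mono _ Set.inter_subset_right)
        (Submodule.map_mono (restrictSupport_mono _ Set.inter_subset_right))),
    restrictScalars_pow_span_X_image, weightedHomogeneousSubmodule_eq_restrictSupport,
    ← restrictSupport_inter, finrank_restrictSupport, Finsupp.ncard_weight_eq_inter_le_sum_three]
  · exact (hfin w).subset Set.inter_subset_left
  · exact (hfin (w - 3 * m)).subset fun d hd => Nat.eq_sub_of_add_eq hd.1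

/-- If `g` is wt-homogeneous of weight `3m` with nonzero coefficient of
`z^m`, then `k[x,y,z]/((x,y)^(3m-2)+(g))` and `k[x,y,z]/(x,y,z)^(3m-2)` have the same
wt-graded Hilbert function. -/
theorem same_hilbert_function (k : Type) [Field k] [CharZero k] (m : ℕ) (hm : 2 ≤ m)
    (g : MvPolynomial (Fin 3) k)
    (hg : MvPolynomial.IsWeightedHomogeneous (![1, 2, 3] : Fin 3 → ℕ) g (3 * m))
    (hz : MvPolynomial.coeff (Finsupp.single (2 : Fin 3) m) g ≠ 0) :
    ∀ w : ℕ,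
      Module.finrank k
        ↥(MvPolynomial.weightedHomogeneousSubmodule k (![1, 2, 3] : Fin 3 → ℕ) w ⊓
          Submodule.restrictScalars k
            (Ideal.span {MvPolynomial.X (0 : Fin 3), MvPolynomial.X 1} ^ (3 * m - 2) +
              Ideal.span {g})) =
      Module.finrank k
        ↥(MvPolynomial.weightedHomogeneousSubmodule k (![1, 2, 3] : Fin 3 → ℕ) w ⊓
          Submodule.restrictScalars k
            ((Ideal.span {MvPolynomial.X (0 : Fin 3), MvPolynomial.X 1, MvPolynomial.X 2} :
              Ideal (MvPolynomial (Fin 3) k)) ^ (3 * m - 2))) :=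
  same_hilbert_function_general k m g hg hz
end

section
/- Fix an integer m ≥ 2 and set ℓ = 3m−2. Let g ∈ k[x,y,z] be a wt-homogeneous polynomial of weight 3m in which the monomial z^m occurs with nonzero coefficient, and let I_g = (x,y)^ℓ + (g). Then every monomial x^i y^j z^k with 2i+2j+3k > 9(m−1) belongs to I_g. -/
/-!
Induction on the exponent `l` of `z`. If `i + j ≥ 3m - 2` the monomial lies in `(x,y)^(3m-2)`;
otherwise `2(i + j) ≤ 6m - 6` forces `l ≥ m`, and multiplying `g` by `x^i y^j z^(l-m)` expresses
`x^i y^j z^l` modulo `(g)` through the monomials `x^(i+a) y^(j+b) z^(l-m+c)` with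
`x^a y^b z^c ≠ z^m` occurring in `g`. Such a monomial has `a + 2b + 3c = 3m`, hence `c < m` and
`2a + 2b + 3c = 3m + a ≥ 3m`: its `z`-exponent is smaller and `2i + 2j + 3l` has not decreased.
-/

open MvPolynomial Finsupp

namespace MvPolynomial

variable {σ K : Type*} [Field K]

lemma monomial_add_mem_of_forall_support {I : Ideal (MvPolynomial σ K)}
    {g : MvPolynomial σ K} (hg : g ∈ I) {d₀ : σ →₀ ℕ} (hd₀ : coeff d₀ g ≠ 0) (s : σ →₀ ℕ)
    (hrest : ∀ d ∈ g.support, d ≠ d₀ → monomial (s + d) (1 : K) ∈ I) :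
    monomial (s + d₀) (1 : K) ∈ I := by
  classical
  have hterm (d : σ →₀ ℕ) : monomial s 1 * monomial d (coeff d g) =
      C (coeff d g) * monomial (s + d) 1 := by
    rw [monomial_mul, C_mul_monomial, one_mul, mul_one]
  have hsg : monomial s 1 * g ∈ I := I.mul_mem_left _ hg
  rw [g.as_sum, Finset.mul_sum, ← Finset.add_sum_erase _ _ (mem_support_iff.mpr hd₀)] at hsg
  have hothers : ∑ d ∈ g.support.erase d₀, monomial s 1 * monomial d (coeff d g) ∈ I :=
    I.sum_mem fun d hd => by
      rw [hterm]
      exact I.mul_mem_left _ (hrest d (Finset.mem_of_mem_erase hd) (Finset.ne_of_mem_erase hd))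
  have hlead := (I.add_mem_iff_left hothers).mp hsg
  rw [hterm] at hlead
  simpa [← mul_assoc, ← C_mul, inv_mul_cancel₀ hd₀] using
    I.mul_mem_left (C (coeff d₀ g)⁻¹) hlead

lemma monomial_single_add_single_add_single_mem_span_X_pow (a b c : σ) {i j l n : ℕ}
    (h : n ≤ i + j) (r : K) :
    monomial (single a i + single b j + single c l) r ∈ Ideal.span {X a, X b} ^ n := by
  have hxy : X a ^ i * X b ^ j ∈ Ideal.span {X a, (X b : MvPolynomial σ K)} ^ (i + j) := by
    rw [pow_add]
    exact Ideal.mul_mem_mul (Ideal.pow_mem_pow (Ideal.subset_span (by simp)) i)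
      (Ideal.pow_mem_pow (Ideal.subset_span (by simp)) j)
  have hmono : monomial (single a i + single b j + single c l) r =
      C r * X c ^ l * (X a ^ i * X b ^ j) := by
    rw [add_comm (single a i + single b j)]
    simp only [X_pow_eq_monomial, monomial_mul, C_mul_monomial, mul_one]
  rw [hmono]
  exact Ideal.mul_mem_left _ _ (Ideal.pow_le_pow_right h hxy)

end MvPolynomial

lemma Finsupp.eq_single_add_single_add_single (d : Fin 3 →₀ ℕ) :
    d = single 0 (d 0) + single 1 (d 1) + single 2 (d 2) := by
  ext t; fin_cases t <;> simp

lemma weight_one_two_three_apply (d : Fin 3 →₀ ℕ) :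
    weight (![1, 2, 3] : Fin 3 → ℕ) d = d 0 + 2 * d 1 + 3 * d 2 := by
  rw [weight_apply, sum_fintype _ _ (by simp)]
  simp [Fin.sum_univ_three, mul_comm]

lemma eq_single_two_of_weight_eq {d : Fin 3 →₀ ℕ} {m : ℕ}
    (hw : weight (![1, 2, 3] : Fin 3 → ℕ) d = 3 * m) (hm : m ≤ d 2) : d = single 2 m := by
  rw [weight_one_two_three_apply] at hw
  rw [d.eq_single_add_single_add_single,
    show d 0 = 0 by omega, show d 1 = 0 by omega, show d 2 = m by omega]
  simp

theorem trimming_general (k : Type) [Field k] (m : ℕ)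
    (g : MvPolynomial (Fin 3) k)
    (hg : MvPolynomial.IsWeightedHomogeneous (![1, 2, 3] : Fin 3 → ℕ) g (3 * m))
    (hz : MvPolynomial.coeff (Finsupp.single (2 : Fin 3) m) g ≠ 0) :
    ∀ i j l : ℕ, 9 * (m - 1) < 2 * i + 2 * j + 3 * l →
      MvPolynomial.monomial
          (Finsupp.single (0 : Fin 3) i + Finsupp.single 1 j + Finsupp.single 2 l)
          (1 : k) ∈
        Ideal.span {MvPolynomial.X (0 : Fin 3), MvPolynomial.X 1} ^ (3 * m - 2) +
          Ideal.span {g} := by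
  intro i j l
  induction l using Nat.strong_induction_on generalizing i j with
  | _ l ih =>
  intro hijl
  by_cases hij : 3 * m - 2 ≤ i + j
  · exact Ideal.mem_sup_left (monomial_single_add_single_add_single_mem_span_X_pow _ _ _ hij _)
  have hml : m ≤ l := by omega
  rw [show single 2 l = single 2 (l - m) + single (2 : Fin 3) m by
    rw [← single_add, Nat.sub_add_cancel hml], ← add_assoc]
  refine monomial_add_mem_of_forall_support
    (Ideal.mem_sup_right (Ideal.mem_span_singleton_self g)) hz _ fun d hd hne => ?_
  have hw := hg (MvPolynomial.mem_support_iff.mp hd)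
  have hd2 : d 2 < m := lt_of_not_ge fun h => hne (eq_single_two_of_weight_eq hw h)
  rw [weight_one_two_three_apply] at hw
  rw [d.eq_single_add_single_add_single, show ∀ a b c a' b' c' : ℕ,
      single (0 : Fin 3) a + single 1 b + single 2 c + (single 0 a' + single 1 b' + single 2 c') =
        single 0 (a + a') + single 1 (b + b') + single 2 (c + c') by
    intros; simp only [single_add]; abel]
  exact ih _ (by omega) _ _ (by omega)

/-- With `ℓ = 3m-2` and `g` wt-homogeneous of weight `3m` with nonzero
coefficient of `z^m`, every monomial `x^i y^j z^k` with `2i+2j+3k > 9(m-1)` belongs to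
`I_g = (x,y)^ℓ + (g)`. -/
theorem trimming (k : Type) [Field k] [CharZero k] (m : ℕ) (hm : 2 ≤ m)
    (g : MvPolynomial (Fin 3) k)
    (hg : MvPolynomial.IsWeightedHomogeneous (![1, 2, 3] : Fin 3 → ℕ) g (3 * m))
    (hz : MvPolynomial.coeff (Finsupp.single (2 : Fin 3) m) g ≠ 0) :
    ∀ i j l : ℕ, 9 * (m - 1) < 2 * i + 2 * j + 3 * l →
      MvPolynomial.monomial
          (Finsupp.single (0 : Fin 3) i + Finsupp.single 1 j + Finsupp.single 2 l)
          (1 : k) ∈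
        Ideal.span {MvPolynomial.X (0 : Fin 3), MvPolynomial.X 1} ^ (3 * m - 2) +
          Ideal.span {g} :=
  trimming_general k m g hg hz
end

section
/- Fix an integer m ≥ 2 and let 𝓟_𝓡 = {(w,t,a) ∈ ℕ³ : w+a ≤ 6m−9 and w−a−6t−3ε(w+a) ≥ 0}. The map u_𝓡(w,t,a) = (a, −3t + (w−a−3ε(w+a))/2, 2t + ε(w+a)) is a bijection from 𝓟_𝓡 onto 𝓡', with inverse u ↦ (wt_𝓡(u), t_𝓡(u), a(u)), where a(u) denotes the first coordinate of u. -/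
open Finset

def uRmap (p : V) : V :=
  (p.2.2, -3 * p.2.1 + (p.1 - p.2.2 - 3 * epsZ (p.1 + p.2.2)) / 2,
    2 * p.2.1 + epsZ (p.1 + p.2.2))

def PRset (m : ℤ) : Set V :=
  {p | nonnegV p ∧ p.1 + p.2.2 ≤ 6 * m - 9 ∧
    0 ≤ p.1 - p.2.2 - 6 * p.2.1 - 3 * epsZ (p.1 + p.2.2)}

/-! The map `u_𝓡` is a bijection of all of `ℤ³`. For `u = (a,b,c)` one has
`wt_𝓡(u) + a = 2a + 2b + 3c ≡ c (mod 2)`, so `ε(w + a)` is the parity of `c` and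
`c = 2⌊c/2⌋ + ε(w + a)`; then `b` is recovered from `w = a + 2b + 3c`. The same identity turns the
inequality of `𝓡'` into `w + a ≤ 6m - 9`, and `b ≥ 0` is the last inequality defining `𝓟_𝓡`, so
`𝓟_𝓡` is exactly the preimage of `𝓡'`. -/

def uRinv (u : V) : V := (wtR u, tR u, u.1)

lemma uRinv_uRmap : Function.LeftInverse uRinv uRmap := by
  rintro ⟨w, t, a⟩
  simp only [uRinv, uRmap, wtR, tR, epsZ, Prod.mk.injEq, and_true]
  omega

lemma uRmap_uRinv : Function.RightInverse uRinv uRmap := by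
  rintro ⟨a, b, c⟩
  simp only [uRmap, uRinv, wtR, tR, epsZ, Prod.mk.injEq, true_and]
  omega

lemma uRmap_bijective : Function.Bijective uRmap :=
  ⟨uRinv_uRmap.injective, uRmap_uRinv.surjective⟩

lemma PRset_eq_preimage_Rprime (m : ℤ) : PRset m = uRmap ⁻¹' Rprime m := by
  ext ⟨w, t, a⟩
  simp only [PRset, Rprime, uRmap, nonnegV, Set.mem_ofPred_eq, Set.mem_preimage, epsZ]
  omega

theorem uR_parametrization_general (m : ℤ) :
    Set.BijOn uRmap (PRset m) (Rprime m) ∧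
    Set.InvOn (fun u : V => ((wtR u, tR u, u.1) : V)) uRmap (PRset m) (Rprime m) := by
  rw [PRset_eq_preimage_Rprime]
  exact ⟨uRmap_bijective.bijOn_preimage, uRinv_uRmap.leftInvOn _, uRmap_uRinv.rightInvOn _⟩

/-- **Proposition `rprimeparamwta`.** `u_𝓡` is a bijection `𝓟_𝓡 → 𝓡'`
with inverse `u ↦ (wt_𝓡(u), t_𝓡(u), a(u))`. -/
theorem uR_parametrization (m : ℤ) (hm : 2 ≤ m) :
    Set.BijOn uRmap (PRset m) (Rprime m) ∧
    Set.InvOn (fun u : V => ((wtR u, tR u, u.1) : V)) uRmap (PRset m) (Rprime m) :=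
  uR_parametrization_general m
end

section
/- Fix an integer m ≥ 2 and let 𝓟_𝓜 = {(w,t,i) ∈ ℕ³ : w+i ≤ 6m−9 and 3(m−1+t) − w + η(w+i) ≤ i ≤ 3(m−1−t) − η(w+i)}. The map v_𝓜(w,t,i) = (i, −3t + 3(m−1) − i − η(w+i), 2t − (m−2) + (w+i+2η(w+i))/3) is a bijection from 𝓟_𝓜 onto 𝓜', with inverse v ↦ (wt_𝓜(v), t_𝓜(v), i(v)), where i(v) denotes the first coordinate of v. -/
open Finset

def vMmap (m : ℤ) (p : V) : V :=
  (p.2.2, -3 * p.2.1 + 3 * (m - 1) - p.2.2 - etaZ (p.1 + p.2.2),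
    2 * p.2.1 - (m - 2) + (p.1 + p.2.2 + 2 * etaZ (p.1 + p.2.2)) / 3)

def PMset (m : ℤ) : Set V :=
  {p | nonnegV p ∧ p.1 + p.2.2 ≤ 6 * m - 9 ∧
    3 * (m - 1 + p.2.1) - p.1 + etaZ (p.1 + p.2.2) ≤ p.2.2 ∧
    p.2.2 ≤ 3 * (m - 1 - p.2.1) - etaZ (p.1 + p.2.2)}

/-! The map `v_𝓜` is invertible on all of `ℤ³`: since `wt_𝓜(v) + i ≡ 3(m-1) - i - j (mod 3)`,
the pair `(t_𝓜(v), η(wt_𝓜(v) + i))` is the quotient and remainder of `3(m-1) - i - j` by `3`,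
which recovers `j`, and then `k` from the weight. Under this change of coordinates the
inequalities defining `𝓟_𝓜` become, one by one, those defining `𝓜'`. -/

def vMinv (m : ℤ) (v : V) : V := (wtM m v, tM m v, v.1)

lemma three_dvd_add_two_mul_etaZ (n : ℤ) : 3 ∣ n + 2 * etaZ n :=
  ⟨n / 3 + etaZ n, by unfold etaZ; linarith [Int.mul_ediv_add_emod n 3]⟩

lemma etaZ_mem_Ico (n : ℤ) : 0 ≤ etaZ n ∧ etaZ n < 3 :=
  ⟨Int.emod_nonneg _ (by decide), Int.emod_lt_of_pos _ (by decide)⟩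

lemma etaZ_wtM_add_fst (m : ℤ) (v : V) :
    etaZ (wtM m v + v.1) = etaZ (3 * (m - 1) - v.1 - v.2.1) :=
  Int.modEq_iff_dvd.2 ⟨2 * m - 1 - v.1 - v.2.1 - v.2.2, by unfold wtM; ring⟩

lemma three_mul_tM_add_etaZ (m : ℤ) (v : V) :
    3 * tM m v + etaZ (wtM m v + v.1) = 3 * (m - 1) - v.1 - v.2.1 := by
  rw [etaZ_wtM_add_fst]
  exact Int.mul_ediv_add_emod _ 3

lemma leftInverse_vMinv_vMmap (m : ℤ) : Function.LeftInverse (vMinv m) (vMmap m) := by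
  rintro ⟨w, t, i⟩
  obtain ⟨q, hq⟩ := three_dvd_add_two_mul_etaZ (w + i)
  have hr := etaZ_mem_Ico (w + i)
  simp only [vMinv, vMmap, wtM, tM, Prod.mk.injEq, and_true]
  generalize etaZ (w + i) = r at *
  omega

lemma rightInverse_vMinv_vMmap (m : ℤ) : Function.RightInverse (vMinv m) (vMmap m) := by
  rintro ⟨i, j, k⟩
  have h := three_mul_tM_add_etaZ m (i, j, k)
  have hk : wtM m (i, j, k) + i + 2 * etaZ (wtM m (i, j, k) + i) =
      3 * (k - 2 * tM m (i, j, k) + m - 2) := by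
    unfold wtM at *; linarith
  simp only [vMinv, vMmap, hk, Int.mul_ediv_cancel_left _ three_ne_zero, Prod.mk.injEq, true_and]
  constructor <;> linarith

lemma vMinv_mem_PMset_iff (m : ℤ) (v : V) : vMinv m v ∈ PMset m ↔ v ∈ Mprime m := by
  obtain ⟨i, j, k⟩ := v
  have h := three_mul_tM_add_etaZ m (i, j, k)
  have hr := etaZ_mem_Ico (wtM m (i, j, k) + i)
  simp only [vMinv, PMset, Mprime, nonnegV, Set.mem_ofPred_eq] at h hr ⊢
  generalize etaZ (wtM m (i, j, k) + i) = r at *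
  generalize tM m (i, j, k) = t at *
  dsimp only [wtM]
  omega

theorem vM_parametrization_general (m : ℤ) :
    Set.BijOn (vMmap m) (PMset m) (Mprime m) ∧
    Set.InvOn (fun v : V => ((wtM m v, tM m v, v.1) : V)) (vMmap m) (PMset m) (Mprime m) := by
  have hinv : Set.InvOn (vMinv m) (vMmap m) (PMset m) (Mprime m) :=
    ⟨(leftInverse_vMinv_vMmap m).leftInvOn _, (rightInverse_vMinv_vMmap m).leftInvOn _⟩
  have hmaps : Set.MapsTo (vMmap m) (PMset m) (Mprime m) := fun p hp => by
    rwa [← vMinv_mem_PMset_iff, leftInverse_vMinv_vMmap m p]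
  have hmaps_inv : Set.MapsTo (vMinv m) (Mprime m) (PMset m) :=
    fun v => (vMinv_mem_PMset_iff m v).2
  exact ⟨hinv.bijOn hmaps hmaps_inv, hinv⟩

/-- **Proposition `mprimeparamwta`.** `v_𝓜` is a bijection `𝓟_𝓜 → 𝓜'`
with inverse `v ↦ (wt_𝓜(v), t_𝓜(v), i(v))`. -/
theorem vM_parametrization (m : ℤ) (hm : 2 ≤ m) :
    Set.BijOn (vMmap m) (PMset m) (Mprime m) ∧
    Set.InvOn (fun v : V => ((wtM m v, tM m v, v.1) : V)) (vMmap m) (PMset m) (Mprime m) :=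
  vM_parametrization_general m
end

section
/- Fix an integer m ≥ 2. The map φ^▭ defined by φ^▭(u) = u + q_{λ(u)} is a bijection from 𝓡^▭ onto 𝓜^▭; it satisfies Divisibility (φ^▭(u) − u has non-negative entries for every u ∈ 𝓡^▭), and it preserves both the weight and the t-invariant: wt_𝓜(φ^▭(u)) = wt_𝓡(u) and t_𝓜(φ^▭(u)) = t_𝓡(u) for every u ∈ 𝓡^▭. -/
open Finset

/-! `φ^▭` extends to a bijection of all of `ℤ³`: translating by `q_h` keeps the first
coordinate and, for every `h`, turns `wt_𝓡` into `wt_𝓜`, so the shift `λ(δ_w - a)` can be read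
off from the image and undone. Writing `δ_w - a = 6λ + ρ`, the image has
`3(m - 1) - i - j = (3c + 3 + ρ) / 2`; for either parity of `c` the admissible residues `ρ` place
`3c + 3 + ρ` among `6⌊c/2⌋ + {0, 2, 4}`, whence `t_𝓜(φ^▭ u) = t_𝓡(u)`. The remaining defining
inequalities of `𝓡^▭` and `𝓜^▭` then correspond exactly, so `𝓡^▭` is the preimage of `𝓜^▭`. -/

lemma lamZ_spec (n : ℤ) :
    6 * lamZ n + rhoZ n = n ∧ -6 ≤ rhoZ n ∧ rhoZ n ≤ 1 ∧ rhoZ n ≠ 0 ∧ rhoZ n ≠ -5 := by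
  unfold lamZ rhoZ
  split_ifs <;> omega

lemma wtM_add_qvec (m h : ℤ) (u : V) : wtM m (u + qvec m h) = wtR u := by
  simp only [wtM, wtR, qvec, Prod.fst_add, Prod.snd_add]
  ring

lemma wtR_sub_qvec (m h : ℤ) (v : V) : wtR (v - qvec m h) = wtM m v := by
  simp only [wtM, wtR, qvec, Prod.fst_sub, Prod.snd_sub]
  ring

def phiRectInv (m : ℤ) (v : V) : V := v - qvec m (lamZ (deltaW m (wtM m v) - v.1))

section

variable (m : ℤ) (u : V)

lemma phiRect_sub_self : phiRect m u - u = qvec m (lamZ (deltaW m (wtR u) - u.1)) :=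
  add_sub_cancel_left u _

lemma phiRect_fst : (phiRect m u).1 = u.1 := by
  simp [phiRect, qvec]

lemma wtM_phiRect : wtM m (phiRect m u) = wtR u :=
  wtM_add_qvec m _ u

lemma phiRectInv_phiRect : phiRectInv m (phiRect m u) = u := by
  rw [phiRectInv, wtM_phiRect, phiRect_fst, phiRect, add_sub_cancel_right]

lemma phiRect_phiRectInv : phiRect m (phiRectInv m u) = u := by
  have hfst : (phiRectInv m u).1 = u.1 := by simp [phiRectInv, qvec]
  have hwt : wtR (phiRectInv m u) = wtM m u := wtR_sub_qvec m _ u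
  rw [phiRect, hwt, hfst, phiRectInv, sub_add_cancel]

lemma phiRect_bijective : Function.Bijective (phiRect m) :=
  ⟨Function.LeftInverse.injective (phiRectInv_phiRect m),
    Function.RightInverse.surjective (phiRect_phiRectInv m)⟩

lemma tM_phiRect : tM m (phiRect m u) = tR u := by
  obtain ⟨a, b, c⟩ := u
  have := lamZ_spec (deltaW m (wtR (a, b, c)) - a)
  simp only [tM, tR, phiRect, qvec, deltaW, wtR, Prod.mk_add_mk] at this ⊢
  omega

variable {m u}

lemma phiRect_mem_Mrect_iff : phiRect m u ∈ Mrect m ↔ u ∈ Rrect m := by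
  simp only [Mrect, Rrect, Set.mem_ofPred_eq, wtM_phiRect, tM_phiRect]
  refine and_congr_left fun ht => ?_
  obtain ⟨a, b, c⟩ := u
  have := lamZ_spec (deltaW m (wtR (a, b, c)) - a)
  simp only [Mprime, Rprime, nonnegV, phiRect, qvec, deltaW, wtR, tR, tauW, Set.mem_ofPred_eq,
    Prod.mk_add_mk] at this ht ⊢
  omega

/-- `λ ≥ 0` because `δ_w - a ≥ 0` on `𝓡'`, and `2λ ≤ m` because `0 ≤ t_𝓡(u) ≤ τ_w` forces
`w ≥ 3(m - 1)`. -/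
lemma nonnegV_phiRect_sub_self (hu : u ∈ Rrect m) : nonnegV (phiRect m u - u) := by
  obtain ⟨a, b, c⟩ := u
  have := lamZ_spec (deltaW m (wtR (a, b, c)) - a)
  rw [phiRect_sub_self]
  simp only [Rrect, Rprime, nonnegV, qvec, deltaW, wtR, tR, tauW, Set.mem_ofPred_eq] at this hu ⊢
  omega

end

theorem phiRect_bijection_general (m : ℤ) :
    Set.BijOn (phiRect m) (Rrect m) (Mrect m) ∧
    ∀ u ∈ Rrect m,
      nonnegV (phiRect m u - u) ∧ wtM m (phiRect m u) = wtR u ∧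
      tM m (phiRect m u) = tR u := by
  refine ⟨?_, fun u hu => ⟨nonnegV_phiRect_sub_self hu, wtM_phiRect m u, tM_phiRect m u⟩⟩
  have hpre : phiRect m ⁻¹' Mrect m = Rrect m := Set.ext fun _ => phiRect_mem_Mrect_iff
  exact hpre ▸ (phiRect_bijective m).bijOn_preimage

/-- **Theorem `phirectregion`.** `φ^▭(u) = u + q_{λ(u)}` is a bijection
`𝓡^▭ → 𝓜^▭` satisfying Divisibility and preserving weight and t-invariant. -/
theorem phiRect_bijection (m : ℤ) (hm : 2 ≤ m) :
    Set.BijOn (phiRect m) (Rrect m) (Mrect m) ∧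
    ∀ u ∈ Rrect m,
      nonnegV (phiRect m u - u) ∧ wtM m (phiRect m u) = wtR u ∧
      tM m (phiRect m u) = tR u :=
  phiRect_bijection_general m
end

section
/- Fix an integer m ≥ 2, an integer w with 3(m−1) ≤ w ≤ 6m−9, and an integer r with 0 ≤ r ≤ ⌊δ_w/2⌋. Let u^(r) = (δ_w−2r, r+η(w), 2τ_w+1). Then u^(r) ∈ 𝓡^▭_w; λ(u^(r)) = ⌊(r+3)/3⌋; ρ(u^(r)) is even and congruent to 2r modulo 6; and every u ∈ 𝓡^▭_w with u^(r) ≺ u has second coordinate b(u) ≥ r+η(w)+1. -/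
open Finset

/-!
The identity `6τ_w + 2η(w) + 3 = w - δ_w` gives `u^(r)` weight `w` and puts it in `𝓡^▭` with the
largest admissible `c`. Since `δ_w - a(u^(r)) = 2r ≢ 1 (mod 6)`, `λ(2r) = ⌊2r/6⌋ + 1` is the largest
value `λ` takes on `(-∞, 2r]`, so `u^(r) ≺ u` forces `a(u) < δ_w - 2r`; together with
`c(u) ≤ 2τ_w + 1`, the weight then forces `b(u) ≥ r + η(w) + 1`.
-/

lemma rhoZ_emod_six (n : ℤ) : rhoZ n % 6 = n % 6 := by
  unfold rhoZ; split <;> omega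

lemma rhoZ_of_emod_ne_one {n : ℤ} (h : n % 6 ≠ 1) : rhoZ n = n % 6 - 6 := if_neg h

lemma lamZ_of_emod_ne_one {n : ℤ} (h : n % 6 ≠ 1) : lamZ n = n / 6 + 1 := by
  rw [lamZ, rhoZ_of_emod_ne_one h]; omega

lemma lamZ_le_ediv_add_one (n : ℤ) : lamZ n ≤ n / 6 + 1 := by
  unfold lamZ rhoZ; split <;> omega

/-- `λ` is not monotone (`λ(6k+1) < λ(6k)`), but away from the residue `1` it takes the largest
value `⌊n/6⌋ + 1` possible, so it cannot be exceeded from below. -/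
lemma lt_of_lamZ_lt_lamZ {n k : ℤ} (hn : n % 6 ≠ 1) (hlt : lamZ n < lamZ k) : n < k := by
  have := lamZ_le_ediv_add_one k
  rw [lamZ_of_emod_ne_one hn] at hlt
  omega

lemma lamZ_two_mul (r : ℤ) : lamZ (2 * r) = (r + 3) / 3 := by
  rw [lamZ_of_emod_ne_one (by omega)]; omega

lemma rhoZ_two_mul_emod_two (r : ℤ) : rhoZ (2 * r) % 2 = 0 := by
  rw [rhoZ_of_emod_ne_one (by omega)]; omega

lemma tauW_nonneg {m w : ℤ} (hw : 3 * (m - 1) ≤ w) : 0 ≤ tauW m w := by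
  unfold tauW; omega

lemma six_mul_tauW_add_two_mul_etaZ (m w : ℤ) :
    6 * tauW m w + 2 * etaZ w + 3 = w - deltaW m w := by
  unfold tauW etaZ deltaW; omega

/-- `u^(r)` in the paper's notation. -/
def urvec (m w r : ℤ) : V := (deltaW m w - 2 * r, r + etaZ w, 2 * tauW m w + 1)

lemma deltaW_sub_urvec_fst (m w r : ℤ) : deltaW m w - (urvec m w r).1 = 2 * r := by
  simp only [urvec]; ring

lemma tR_urvec (m w r : ℤ) : tR (urvec m w r) = tauW m w := by
  simp only [tR, urvec]; omega

lemma wtR_urvec (m w r : ℤ) : wtR (urvec m w r) = w := by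
  have := six_mul_tauW_add_two_mul_etaZ m w
  simp only [wtR, urvec]; omega

lemma urvec_mem_Rrect {m w r : ℤ} (hw : 3 * (m - 1) ≤ w) (hr0 : 0 ≤ r)
    (hr1 : r ≤ deltaW m w / 2) : urvec m w r ∈ Rrect m := by
  have hτ := tauW_nonneg hw
  have := six_mul_tauW_add_two_mul_etaZ m w
  refine ⟨⟨⟨?_, ?_, ?_⟩, ?_⟩, ?_⟩
  · simp only [urvec]; omega
  · simp only [urvec, etaZ]; omega
  · simp only [urvec]; omega
  · simp only [urvec]; unfold deltaW at *; omega
  · rw [tR_urvec, wtR_urvec]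

/-- From `c ≤ 2τ_w + 1` and `a + 2b + 3c = w`. -/
lemma deltaW_sub_fst_add_two_mul_etaZ_le {m w : ℤ} {u : V} (hu : u ∈ Rrect m)
    (hw : wtR u = w) : deltaW m w - u.1 + 2 * etaZ w ≤ 2 * u.2.1 := by
  obtain ⟨-, ht⟩ := hu
  have := six_mul_tauW_add_two_mul_etaZ m w
  simp only [tR, hw] at ht
  simp only [wtR] at hw
  omega

lemma fst_lt_of_precR_urvec {m w r : ℤ} {u : V} (hu : u ∈ Rrect m) (hw : wtR u = w)
    (h : precR m w (urvec m w r) u) : u.1 < deltaW m w - 2 * r := by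
  have ht : tR u ≤ tR (urvec m w r) := by
    rw [tR_urvec, ← hw]; exact hu.2
  simp only [precR, lamU, deltaW_sub_urvec_fst] at h
  rcases h with hlt | ⟨-, hlt⟩ | ⟨-, -, hlt⟩
  · have := lt_of_lamZ_lt_lamZ (by omega) hlt
    omega
  · simpa only [urvec] using hlt
  · exact absurd hlt (not_lt.2 ht)

theorem ur_properties_general (m w r : ℤ) (hw1 : 3 * (m - 1) ≤ w)
    (hr0 : 0 ≤ r) (hr1 : r ≤ deltaW m w / 2)
    (ur : V) (hur : ur = (deltaW m w - 2 * r, r + etaZ w, 2 * tauW m w + 1)) :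
    ur ∈ Rrect m ∧ wtR ur = w ∧
    lamZ (deltaW m w - ur.1) = (r + 3) / 3 ∧
    rhoZ (deltaW m w - ur.1) % 2 = 0 ∧
    rhoZ (deltaW m w - ur.1) % 6 = (2 * r) % 6 ∧
    ∀ u ∈ Rrect m, wtR u = w → precR m w ur u → r + etaZ w + 1 ≤ u.2.1 := by
  obtain rfl : ur = urvec m w r := hur
  rw [deltaW_sub_urvec_fst]
  refine ⟨urvec_mem_Rrect hw1 hr0 hr1, wtR_urvec m w r, lamZ_two_mul r,
    rhoZ_two_mul_emod_two r, rhoZ_emod_six _, fun u hu hw hprec => ?_⟩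
  have hb := deltaW_sub_fst_add_two_mul_etaZ_le hu hw
  have ha := fst_lt_of_precR_urvec hu hw hprec
  omega

/-- **Lemma `urrectangular`.** Properties of `u^(r) = (δ_w-2r, r+η(w), 2τ_w+1)`. -/
theorem ur_properties (m w r : ℤ) (hm : 2 ≤ m) (hw1 : 3 * (m - 1) ≤ w) (hw2 : w ≤ 6 * m - 9)
    (hr0 : 0 ≤ r) (hr1 : r ≤ deltaW m w / 2)
    (ur : V) (hur : ur = (deltaW m w - 2 * r, r + etaZ w, 2 * tauW m w + 1)) :
    ur ∈ Rrect m ∧ wtR ur = w ∧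
    lamZ (deltaW m w - ur.1) = (r + 3) / 3 ∧
    rhoZ (deltaW m w - ur.1) % 2 = 0 ∧
    rhoZ (deltaW m w - ur.1) % 6 = (2 * r) % 6 ∧
    ∀ u ∈ Rrect m, wtR u = w → precR m w ur u → r + etaZ w + 1 ≤ u.2.1 :=
  ur_properties_general m w r hw1 hr0 hr1 ur hur
end

section
/- Fix an integer m ≥ 2 and an integer w with 3(m−1) ≤ w ≤ 6m−9. Let u ∈ 𝓡^▭_w and let n₁ < n₂ be integers. If both u+q_{n₁} and u+q_{n₂} belong to 𝓜^▭_w, then u+q_{n₂} ≺ u+q_{n₁} in the order on 𝓜^▭_w. -/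
open Finset

/-! Since `q_h` has first coordinate `0`, all the points `u + q_h` share the same `i` and hence
the same `λ`, so only the last clause of `≺` can separate them; and adding `q_h` raises `j` by
`3h`, which lowers `t_𝓜` by exactly `h`. -/

lemma fst_add_qvec (m h : ℤ) (u : V) : (u + qvec m h).1 = u.1 :=
  add_zero u.1

lemma lamU_add_qvec (m w h : ℤ) (u : V) : lamU m w (u + qvec m h) = lamU m w u := by
  simp only [lamU, fst_add_qvec]

lemma tM_add_qvec (m h : ℤ) (u : V) : tM m (u + qvec m h) = tM m u - h := by
  simp only [tM, qvec, Prod.fst_add, Prod.snd_add]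
  omega

lemma strictAnti_tM_add_qvec (m : ℤ) (u : V) : StrictAnti fun h => tM m (u + qvec m h) := by
  intro h₁ h₂ hlt
  simp only [tM_add_qvec]
  omega

theorem q_order_reversal_general (m w : ℤ)
    (u : V)
    (n1 n2 : ℤ) (hn : n1 < n2) :
    precM m w (u + qvec m n2) (u + qvec m n1) :=
  Or.inr <| Or.inr ⟨(lamU_add_qvec m w n2 u).trans (lamU_add_qvec m w n1 u).symm,
    (fst_add_qvec m n2 u).trans (fst_add_qvec m n1 u).symm, strictAnti_tM_add_qvec m u hn⟩

/-- **Lemma `lemmaunirectangle`.** If `u + q_{n₁}` and `u + q_{n₂}` both lie in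
`𝓜^▭_w` and `n₁ < n₂`, then `u + q_{n₂} ≺ u + q_{n₁}`. -/
theorem q_order_reversal (m w : ℤ) (hm : 2 ≤ m) (hw1 : 3 * (m - 1) ≤ w) (hw2 : w ≤ 6 * m - 9)
    (u : V) (hu : u ∈ Rrect m) (huw : wtR u = w)
    (n1 n2 : ℤ) (hn : n1 < n2)
    (h1 : u + qvec m n1 ∈ Mrect m) (h2 : u + qvec m n2 ∈ Mrect m) :
    precM m w (u + qvec m n2) (u + qvec m n1) :=
  q_order_reversal_general m w u n1 n2 hn
end

section
/- Fix an integer m ≥ 2. The maps u^△ : 𝓓^T → 𝓡^T and v^△ : 𝓓^T → 𝓜^T are well-defined bijections. Moreover, the composition φ^△ = v^△∘(u^△)⁻¹ : 𝓡^T → 𝓜^T satisfies Divisibility (φ^△(u) − u has non-negative entries for every u ∈ 𝓡^T) and preserves weights and t-invariants: wt_𝓜(φ^△(u)) = wt_𝓡(u) and t_𝓜(φ^△(u)) = t_𝓡(u) for every u ∈ 𝓡^T. -/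
open Finset

/-!
Both `u^△` and `v^△` are invertible on all of `ℤ³`, with explicit inverses
`(a, b, c) ↦ (wt_𝓡, b, ⌊a/3⌋)` and `(i, j, k) ↦ (wt_𝓜, ⌊j/2⌋, i + j + k - (3m - 2))`:
the residues `η(w + r)` and `ε(w + s)` are recovered as `a mod 3` and `j mod 2`, and they make
every division in the formulas exact. The same exactness shows, for every `d`, that both maps
send the weight `w` to the weight and `t_𝓓(d)` to the `t`-invariant. Bijectivity therefore
reduces to checking that the four maps respect the regions, and Divisibility to a coordinatewise
inequality on `𝓓^T`; all of these are linear arithmetic with floor division.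
-/

def uTriInv (u : V) : V := (wtR u, u.2.1, u.1 / 3)

def vTriInv (m : ℤ) (v : V) : V := (wtM m v, v.2.1 / 2, v.1 + v.2.1 + v.2.2 - (3 * m - 2))

theorem leftInverse_uTriInv_uTri : Function.LeftInverse uTriInv uTri := by
  rintro ⟨w, r, s⟩
  simp only [uTriInv, uTri, wtR, etaZ, Prod.mk.injEq, true_and]
  omega

theorem rightInverse_uTriInv_uTri : Function.RightInverse uTriInv uTri := by
  rintro ⟨a, b, c⟩
  simp only [uTriInv, uTri, wtR, etaZ, Prod.mk.injEq, true_and]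
  omega

theorem leftInverse_vTriInv_vTri (m : ℤ) : Function.LeftInverse (vTriInv m) (vTri m) := by
  rintro ⟨w, r, s⟩
  simp only [vTriInv, vTri, wtM, epsZ, Prod.mk.injEq]
  omega

theorem rightInverse_vTriInv_vTri (m : ℤ) : Function.RightInverse (vTriInv m) (vTri m) := by
  rintro ⟨i, j, k⟩
  simp only [vTriInv, vTri, wtM, epsZ, Prod.mk.injEq]
  omega

theorem wtR_uTri (d : V) : wtR (uTri d) = d.1 := by
  simp only [wtR, uTri, etaZ]
  omega

theorem wtM_vTri (m : ℤ) (d : V) : wtM m (vTri m d) = d.1 := by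
  simp only [wtM, vTri, epsZ]
  omega

theorem tR_uTri (d : V) : tR (uTri d) = tD d := by
  simp only [tR, uTri, tD, etaZ]
  omega

theorem tM_vTri (m : ℤ) (d : V) : tM m (vTri m d) = tD d := by
  simp only [tM, vTri, tD, epsZ]
  omega

theorem uTri_mapsTo (m : ℤ) : Set.MapsTo uTri (DText m) (RText m) := by
  intro d hd
  refine ⟨?_, by rw [tR_uTri, wtR_uTri]; exact hd.2⟩
  obtain ⟨⟨⟨-, hr, hs⟩, hrs⟩, -⟩ := hd
  simp only [nonnegV, uTri, etaZ]
  omega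

theorem uTriInv_mapsTo (m : ℤ) : Set.MapsTo uTriInv (RText m) (DText m) := by
  rintro ⟨a, b, c⟩ hu
  simp only [RText, nonnegV, tR, tauW, wtR, Set.mem_ofPred_eq] at hu
  simp only [DText, Dall, nonnegV, uTriInv, tD, tauW, wtR, Set.mem_ofPred_eq]
  omega

theorem vTri_mapsTo (m : ℤ) : Set.MapsTo (vTri m) (DText m) (MText m) := by
  intro d hd
  refine ⟨?_, by rw [tM_vTri, wtM_vTri]; exact hd.2⟩
  obtain ⟨⟨⟨hw, hr, hs⟩, hrs⟩, ht⟩ := hd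
  simp only [tD, tauW] at ht
  simp only [Mfull, nonnegV, vTri, epsZ, Set.mem_ofPred_eq]
  omega

theorem vTriInv_mapsTo (m : ℤ) : Set.MapsTo (vTriInv m) (MText m) (DText m) := by
  rintro ⟨i, j, k⟩ hv
  simp only [MText, Mfull, nonnegV, tM, tauW, wtM, Set.mem_ofPred_eq] at hv
  simp only [DText, Dall, nonnegV, vTriInv, tD, tauW, wtM, Set.mem_ofPred_eq]
  omega

theorem bijOn_uTri (m : ℤ) : Set.BijOn uTri (DText m) (RText m) :=
  Set.InvOn.bijOn
    ⟨leftInverse_uTriInv_uTri.leftInvOn _, rightInverse_uTriInv_uTri.rightInvOn _⟩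
    (uTri_mapsTo m) (uTriInv_mapsTo m)

theorem bijOn_vTri (m : ℤ) : Set.BijOn (vTri m) (DText m) (MText m) :=
  Set.InvOn.bijOn
    ⟨(leftInverse_vTriInv_vTri m).leftInvOn _, (rightInverse_vTriInv_vTri m).rightInvOn _⟩
    (vTri_mapsTo m) (vTriInv_mapsTo m)

theorem nonnegV_vTri_sub_uTri {m : ℤ} {d : V} (hd : d ∈ DText m) :
    nonnegV (vTri m d - uTri d) := by
  obtain ⟨⟨⟨-, hr, hs⟩, hrs⟩, ht⟩ := hd
  simp only [tD, tauW] at ht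
  simp only [nonnegV, vTri, uTri, epsZ, etaZ, Prod.fst_sub, Prod.snd_sub]
  omega

theorem phiTri_bijection_general (m : ℤ) :
    Set.BijOn uTri (DText m) (RText m) ∧
    Set.BijOn (vTri m) (DText m) (MText m) ∧
    ∀ d ∈ DText m,
      nonnegV (vTri m d - uTri d) ∧ wtM m (vTri m d) = wtR (uTri d) ∧
      tM m (vTri m d) = tR (uTri d) :=
  ⟨bijOn_uTri m, bijOn_vTri m, fun d hd =>
    ⟨nonnegV_vTri_sub_uTri hd, by rw [wtM_vTri, wtR_uTri], by rw [tM_vTri, tR_uTri]⟩⟩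

/-- **Theorem `phitriregion`.** `u^△` and `v^△` are bijections from `𝓓^T`
onto `𝓡^T` and `𝓜^T` respectively, and the induced bijection `φ^△ = v^△ ∘ (u^△)⁻¹`
satisfies Divisibility and preserves weights and t-invariants. -/
theorem phiTri_bijection (m : ℤ) (hm : 2 ≤ m) :
    Set.BijOn uTri (DText m) (RText m) ∧
    Set.BijOn (vTri m) (DText m) (MText m) ∧
    ∀ d ∈ DText m,
      nonnegV (vTri m d - uTri d) ∧ wtM m (vTri m d) = wtR (uTri d) ∧
      tM m (vTri m d) = tR (uTri d) :=
  phiTri_bijection_general m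
end
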